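/- arXiv:1505.07001 — 4 statements merged into one kernel-verified Lean document; each statement's English description precedes it below -/
import Mathlib

section
/- Let $r, u \ge 0$ be reals, $\alpha < 2$, and $N \ge 0$. Then $\left(\sum_{k=1}^{\infty} \frac{1}{k}\left[\frac{k^{\alpha}}{(k+u)^2}\left(1 + \frac{r}{k+u}\right)^{-N}\right]^2\right)^{1/2} \le C \sum_{k=1}^{\infty} \frac{1}{k} \cdot \frac{k^{\alpha}}{(k+u)^2}\left(1 + \frac{r}{k+u}\right)^{-N}$, with $C$ independent of $r$ and $u$. -/
open scoped ENNReal

private lemma aux_l2_l1 (b : ℕ → ℝ) (hb : ∀ n, 0 ≤ b n) (c : ℝ) (hc : 0 < c)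
    (h : ∀ n j : ℕ, n ≤ j → j ≤ 2 * n + 1 →
      c / (2 * ((n : ℝ) + 1)) * b n ≤ 1 / ((j : ℝ) + 1) * b j) :
    (∑' n : ℕ, ENNReal.ofReal ((1 / ((n : ℝ) + 1)) * b n ^ 2)) ^ (1 / 2 : ℝ)
      ≤ ENNReal.ofReal (2 / c) ^ (1 / 2 : ℝ) *
        ∑' n : ℕ, ENNReal.ofReal ((1 / ((n : ℝ) + 1)) * b n) := by
  set S : ℝ≥0∞ := ∑' n : ℕ, ENNReal.ofReal ((1 / ((n : ℝ) + 1)) * b n) with hS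
  -- key : each b n is dominated by (2/c) * S
  have key : ∀ n : ℕ, ENNReal.ofReal (c / 2 * b n) ≤ S := by
    intro n
    have hsub : ∑ j ∈ Finset.Ico n (2 * n + 2),
        ENNReal.ofReal ((1 / ((j : ℝ) + 1)) * b j) ≤ S := ENNReal.sum_le_tsum _
    have hterm : ∀ j ∈ Finset.Ico n (2 * n + 2),
        ENNReal.ofReal (c / (2 * ((n : ℝ) + 1)) * b n)
          ≤ ENNReal.ofReal ((1 / ((j : ℝ) + 1)) * b j) := by
      intro j hj
      rw [Finset.mem_Ico] at hj
      exact ENNReal.ofReal_le_ofReal (h n j hj.1 (by omega))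
    have hsum : (n + 2 : ℕ) • ENNReal.ofReal (c / (2 * ((n : ℝ) + 1)) * b n)
        ≤ ∑ j ∈ Finset.Ico n (2 * n + 2), ENNReal.ofReal ((1 / ((j : ℝ) + 1)) * b j) := by
      have hcard : (Finset.Ico n (2 * n + 2)).card = n + 2 := by
        rw [Nat.card_Ico]; omega
      calc (n + 2 : ℕ) • ENNReal.ofReal (c / (2 * ((n : ℝ) + 1)) * b n)
          = ∑ _j ∈ Finset.Ico n (2 * n + 2),
              ENNReal.ofReal (c / (2 * ((n : ℝ) + 1)) * b n) := by
            rw [Finset.sum_const, hcard]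
        _ ≤ _ := Finset.sum_le_sum hterm
    refine le_trans ?_ (le_trans hsum hsub)
    rw [nsmul_eq_mul]
    have hcast : ((n + 2 : ℕ) : ℝ≥0∞) = ENNReal.ofReal ((n : ℝ) + 2) := by
      rw [← ENNReal.ofReal_natCast]; norm_num
    rw [hcast, ← ENNReal.ofReal_mul (by positivity)]
    apply ENNReal.ofReal_le_ofReal
    have hn1 : (0 : ℝ) < (n : ℝ) + 1 := by positivity
    have hbn := hb n
    rw [div_mul_eq_mul_div, div_mul_eq_mul_div, mul_div_assoc']
    rw [div_le_div_iff₀ (by norm_num) (by positivity)]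
    nlinarith [mul_nonneg hc.le hbn]
  -- pointwise bound for the squared terms
  have ptwise : ∀ n : ℕ, ENNReal.ofReal ((1 / ((n : ℝ) + 1)) * b n ^ 2)
      ≤ (ENNReal.ofReal (2 / c) * S) * ENNReal.ofReal ((1 / ((n : ℝ) + 1)) * b n) := by
    intro n
    have h1 : (1 / ((n : ℝ) + 1)) * b n ^ 2 = b n * ((1 / ((n : ℝ) + 1)) * b n) := by ring
    rw [h1, ENNReal.ofReal_mul (hb n)]
    have h2 : b n = (2 / c) * (c / 2 * b n) := by field_simp
    have h3 : ENNReal.ofReal (b n) ≤ ENNReal.ofReal (2 / c) * S := by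
      calc ENNReal.ofReal (b n)
          = ENNReal.ofReal (2 / c) * ENNReal.ofReal (c / 2 * b n) := by
            rw [← ENNReal.ofReal_mul (by positivity), ← h2]
        _ ≤ ENNReal.ofReal (2 / c) * S := mul_le_mul_right (key n) _
    exact mul_le_mul_left h3 _
  have hT : (∑' n : ℕ, ENNReal.ofReal ((1 / ((n : ℝ) + 1)) * b n ^ 2))
      ≤ ENNReal.ofReal (2 / c) * S * S := by
    calc (∑' n : ℕ, ENNReal.ofReal ((1 / ((n : ℝ) + 1)) * b n ^ 2))
        ≤ ∑' n : ℕ, (ENNReal.ofReal (2 / c) * S) * ENNReal.ofReal ((1 / ((n : ℝ) + 1)) * b n) :=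
          ENNReal.tsum_le_tsum ptwise
      _ = ENNReal.ofReal (2 / c) * S * S := by rw [ENNReal.tsum_mul_left]
  calc (∑' n : ℕ, ENNReal.ofReal ((1 / ((n : ℝ) + 1)) * b n ^ 2)) ^ (1 / 2 : ℝ)
      ≤ (ENNReal.ofReal (2 / c) * S * S) ^ (1 / 2 : ℝ) :=
        ENNReal.rpow_le_rpow hT (by norm_num)
    _ = ENNReal.ofReal (2 / c) ^ (1 / 2 : ℝ) * S := by
        rw [mul_assoc, ENNReal.mul_rpow_of_nonneg _ _ (by norm_num : (0:ℝ) ≤ 1/2)]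
        congr 1
        rw [← sq, ← ENNReal.rpow_natCast S 2, ← ENNReal.rpow_mul]
        norm_num

/-- An `ℓ²`-to-`ℓ¹` comparison for sequences of the form
`k ↦ (1/k) kᵅ (k+u)⁻² (1 + r/(k+u))^{-N}`, with constant independent of `r` and `u`. -/
theorem stmt_3 (α : ℝ) (hα : α < 2) (N : ℝ) (hN : 0 ≤ N) :
    ∃ C : ℝ≥0∞, C ≠ ⊤ ∧ ∀ r u : ℝ, 0 ≤ r → 0 ≤ u →
      (∑' n : ℕ, ENNReal.ofReal ((1 / ((n : ℝ) + 1)) *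
          (((n : ℝ) + 1) ^ α / (((n : ℝ) + 1 + u) ^ 2) *
            (1 + r / ((n : ℝ) + 1 + u)) ^ (-N)) ^ 2)) ^ (1 / 2 : ℝ)
      ≤ C * ∑' n : ℕ, ENNReal.ofReal ((1 / ((n : ℝ) + 1)) *
          (((n : ℝ) + 1) ^ α / (((n : ℝ) + 1 + u) ^ 2) *
            (1 + r / ((n : ℝ) + 1 + u)) ^ (-N))) := by
  have h2α : (0 : ℝ) < 2 ^ α := Real.rpow_pos_of_pos (by norm_num) α
  set c : ℝ := min 1 (2 ^ α) / 4 with hcdef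
  have hc0 : 0 < c := by
    have : (0:ℝ) < min 1 (2 ^ α) := lt_min one_pos h2α
    positivity
  refine ⟨ENNReal.ofReal (2 / c) ^ (1 / 2 : ℝ), ?_, ?_⟩
  · exact ENNReal.rpow_ne_top_of_nonneg (by norm_num) ENNReal.ofReal_ne_top
  intro r u hr hu
  apply aux_l2_l1
    (fun n => ((n : ℝ) + 1) ^ α / (((n : ℝ) + 1 + u) ^ 2) *
      (1 + r / ((n : ℝ) + 1 + u)) ^ (-N))
  · intro n
    have hn : (0 : ℝ) < (n : ℝ) + 1 + u := by positivity
    have hbase : (0 : ℝ) < 1 + r / ((n : ℝ) + 1 + u) := by positivity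
    positivity
  · exact hc0
  · intro n j hnj hj2
    have hn1 : (0 : ℝ) < (n : ℝ) + 1 := by positivity
    have hj1 : (0 : ℝ) < (j : ℝ) + 1 := by positivity
    have hnu : (0 : ℝ) < (n : ℝ) + 1 + u := by positivity
    have hju : (0 : ℝ) < (j : ℝ) + 1 + u := by positivity
    have hjn : (n : ℝ) ≤ (j : ℝ) := Nat.cast_le.mpr hnj
    have hj2' : (j : ℝ) + 1 ≤ 2 * ((n : ℝ) + 1) := by
      have : (j : ℝ) ≤ 2 * (n : ℝ) + 1 := by exact_mod_cast Nat.cast_le.mpr hj2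
      linarith
    -- factor inequalities
    have hA : 1 / (2 * ((n : ℝ) + 1)) ≤ 1 / ((j : ℝ) + 1) :=
      one_div_le_one_div_of_le hj1 hj2'
    have hP : min 1 (2 ^ α) * ((n : ℝ) + 1) ^ α ≤ ((j : ℝ) + 1) ^ α := by
      rcases le_or_gt 0 α with hα0 | hα0
      · calc min 1 (2 ^ α) * ((n : ℝ) + 1) ^ α
            ≤ 1 * ((n : ℝ) + 1) ^ α := by
              apply mul_le_mul_of_nonneg_right (min_le_left _ _)
              positivity
          _ = ((n : ℝ) + 1) ^ α := one_mul _
          _ ≤ ((j : ℝ) + 1) ^ α := Real.rpow_le_rpow hn1.le (by linarith) hα0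
      · calc min 1 (2 ^ α) * ((n : ℝ) + 1) ^ α
            ≤ 2 ^ α * ((n : ℝ) + 1) ^ α := by
              apply mul_le_mul_of_nonneg_right (min_le_right _ _)
              positivity
          _ = (2 * ((n : ℝ) + 1)) ^ α := (Real.mul_rpow (by norm_num) hn1.le).symm
          _ ≤ ((j : ℝ) + 1) ^ α := Real.rpow_le_rpow_of_nonpos hj1 hj2' hα0.le
    have hQ : ((j : ℝ) + 1 + u) ^ 2 ≤ 4 * (((n : ℝ) + 1 + u) ^ 2) := by
      have h1 : (j : ℝ) + 1 + u ≤ 2 * ((n : ℝ) + 1 + u) := by linarith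
      nlinarith
    have hY : (1 + r / ((n : ℝ) + 1 + u)) ^ (-N) ≤ (1 + r / ((j : ℝ) + 1 + u)) ^ (-N) := by
      apply Real.rpow_le_rpow_of_nonpos
      · positivity
      · have : r / ((j : ℝ) + 1 + u) ≤ r / ((n : ℝ) + 1 + u) :=
          div_le_div_of_nonneg_left hr hnu (by linarith)
        linarith
      · linarith
    have hYn : (0 : ℝ) ≤ (1 + r / ((j : ℝ) + 1 + u)) ^ (-N) := by positivity
    have hYn' : (0 : ℝ) ≤ (1 + r / ((n : ℝ) + 1 + u)) ^ (-N) := by positivity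
    -- combine: b j ≥ c * b n
    have hBfrac : (min 1 (2 ^ α) * ((n : ℝ) + 1) ^ α) / (4 * (((n : ℝ) + 1 + u) ^ 2))
        ≤ ((j : ℝ) + 1) ^ α / (((j : ℝ) + 1 + u) ^ 2) := by
      apply div_le_div₀ (by positivity) hP (by positivity) hQ
    have hB : c * (((n : ℝ) + 1) ^ α / (((n : ℝ) + 1 + u) ^ 2) *
            (1 + r / ((n : ℝ) + 1 + u)) ^ (-N))
        ≤ ((j : ℝ) + 1) ^ α / (((j : ℝ) + 1 + u) ^ 2) *
            (1 + r / ((j : ℝ) + 1 + u)) ^ (-N) := by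
      have heq : c * (((n : ℝ) + 1) ^ α / (((n : ℝ) + 1 + u) ^ 2) *
            (1 + r / ((n : ℝ) + 1 + u)) ^ (-N))
          = (min 1 (2 ^ α) * ((n : ℝ) + 1) ^ α) / (4 * (((n : ℝ) + 1 + u) ^ 2)) *
            (1 + r / ((n : ℝ) + 1 + u)) ^ (-N) := by
        rw [hcdef]; field_simp
      rw [heq]
      exact mul_le_mul hBfrac hY hYn' (by positivity)
    calc c / (2 * ((n : ℝ) + 1)) * (((n : ℝ) + 1) ^ α / (((n : ℝ) + 1 + u) ^ 2) *
            (1 + r / ((n : ℝ) + 1 + u)) ^ (-N))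
        = 1 / (2 * ((n : ℝ) + 1)) * (c * (((n : ℝ) + 1) ^ α / (((n : ℝ) + 1 + u) ^ 2) *
            (1 + r / ((n : ℝ) + 1 + u)) ^ (-N))) := by ring
      _ ≤ 1 / ((j : ℝ) + 1) * (((j : ℝ) + 1) ^ α / (((j : ℝ) + 1 + u) ^ 2) *
            (1 + r / ((j : ℝ) + 1 + u)) ^ (-N)) := by
          apply mul_le_mul hA hB (by positivity) (by positivity)
end

section
/- Let $P$ be a self-adjoint Markov operator on $L^2$ and suppose the family $(P^k)_{k\ge 1}$ satisfies $L^2$ Gaffney estimates: for every $N$, $\|P^k[f\mathbf{1}_F]\|_{L^2(E)} \le C_N(1+\rho(E,F)/(1+k))^{-N}\|f\|_{L^2}$. Then the family $(I - (I+s\Delta)^{-1})_{s>0}$ satisfies $L^2$ Gaffney estimates: for every $N$, $\|(I-(I+s\Delta)^{-1})[f\mathbf{1}_F]\|_{L^2(E)} \le C_N'(1+\rho(E,F)/(1+s))^{-N}\|f\|_{L^2}$. -/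
/-!
Expanding the resolvent, `(I + sΔ)⁻¹ = ∑ₖ (1 + s)⁻¹ (s / (1 + s))ᵏ Pᵏ`, the Gaffney estimate for `Pᵏ`
is moved to scale `1 + s` by `1 + D/(1+s) ≤ (1 + D/(1+k)) (1 + (1+k)/(1+s))`. The resulting
polynomial loss is absorbed by the geometric coefficient: `(s/(1+s))ᵏ ≤ exp (-k/(1+s))` while
`(1 + (1+k)/(1+s))ᵐ ≤ 2ᵐ m! exp (k/(1+s))`. Taking `m = N + 2` leaves the weight
`(1+s)/(1+s+k)²`, which is dominated by the telescoping increments `(1+s)/(1+s+k) - (1+s)/(1+s+k+1)`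
of total sum `1`. The identity term is the Gaffney estimate for `k = 0`.
-/

open Real Filter Topology Finset
open scoped Nat

theorem one_add_pow_le_factorial_mul_exp {y : ℝ} (hy : 0 ≤ y) (m : ℕ) :
    (1 + y) ^ m ≤ m ! * exp y := by
  have hchoose : ∀ j ∈ range (m + 1), y ^ j * (m.choose j : ℝ) ≤ m ! * (y ^ j / j !) := by
    intro j hj
    have hle : (m.choose j * j ! : ℝ) ≤ m ! := by
      exact_mod_cast (Nat.choose_mul_factorial_mul_factorial (mem_range_succ_iff.mp hj)) ▸
        Nat.le_mul_of_pos_right _ (Nat.factorial_pos _)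
    have := mul_le_mul_of_nonneg_left hle (pow_nonneg hy j)
    rw [mul_div_assoc', le_div_iff₀ (by positivity)]
    linarith
  calc (1 + y) ^ m = ∑ j ∈ range (m + 1), y ^ j * (m.choose j : ℝ) := by
        simp [add_comm 1 y, add_pow]
    _ ≤ ∑ j ∈ range (m + 1), m ! * (y ^ j / j !) := sum_le_sum hchoose
    _ = m ! * ∑ j ∈ range (m + 1), y ^ j / j ! := (mul_sum ..).symm
    _ ≤ m ! * exp y := mul_le_mul_of_nonneg_left (sum_le_exp_of_nonneg hy _) (by positivity)

theorem div_one_add_pow_mul_one_add_pow_le {s : ℝ} (hs : 0 ≤ s) (k m : ℕ) :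
    (s / (1 + s)) ^ k * (1 + (1 + k) / (1 + s)) ^ m ≤ 2 ^ m * m ! := by
  set y : ℝ := k / (1 + s)
  have hy : 0 ≤ y := by positivity
  have hinv : 1 / (1 + s) ≤ 1 := by rw [div_le_one (by positivity)]; linarith
  have hdecay : (s / (1 + s)) ^ k ≤ exp (-y) := by
    have hbase : s / (1 + s) ≤ exp (-(1 / (1 + s))) := by
      have := add_one_le_exp (-(1 / (1 + s)))
      have e : s / (1 + s) = -(1 / (1 + s)) + 1 := by field_simp; ring
      linarith
    calc (s / (1 + s)) ^ k ≤ exp (-(1 / (1 + s))) ^ k := pow_le_pow_left₀ (by positivity) hbase k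
      _ = exp (-y) := by rw [← exp_nat_mul]; congr 1; simp only [y]; ring
  have hgrowth : (1 + (1 + k) / (1 + s)) ^ m ≤ 2 ^ m * (m ! * exp y) := by
    have hbase : 1 + (1 + k) / (1 + s) ≤ 2 * (1 + y) := by
      have e : (1 + k) / (1 + s) = 1 / (1 + s) + y := by simp only [y]; ring
      rw [e]; linarith
    calc (1 + (1 + k) / (1 + s)) ^ m ≤ (2 * (1 + y)) ^ m := pow_le_pow_left₀ (by positivity) hbase m
      _ = 2 ^ m * (1 + y) ^ m := mul_pow ..
      _ ≤ 2 ^ m * (m ! * exp y) :=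
        mul_le_mul_of_nonneg_left (one_add_pow_le_factorial_mul_exp hy m) (by positivity)
  calc (s / (1 + s)) ^ k * (1 + (1 + k) / (1 + s)) ^ m ≤ exp (-y) * (2 ^ m * (m ! * exp y)) :=
        mul_le_mul hdecay hgrowth (by positivity) (exp_pos _).le
    _ = 2 ^ m * m ! * exp (-y + y) := by rw [exp_add]; ring
    _ = 2 ^ m * m ! := by simp

theorem hasSum_div_add_sub_div_add_succ {u : ℝ} (hu : 0 < u) :
    HasSum (fun k : ℕ => u / (u + k) - u / (u + (k + 1))) 1 := by
  have hnonneg : ∀ k : ℕ, 0 ≤ u / (u + k) - u / (u + (k + 1)) := fun k =>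
    sub_nonneg.mpr (div_le_div_of_nonneg_left hu.le (by positivity) (by linarith))
  rw [hasSum_iff_tendsto_nat_of_nonneg hnonneg]
  have hlim : Tendsto (fun n : ℕ => u / (u + n)) atTop (𝓝 0) :=
    tendsto_const_nhds.div_atTop (tendsto_atTop_add_const_left _ u tendsto_natCast_atTop_atTop)
  have hpartial : ∀ n : ℕ, ∑ k ∈ range n, (u / (u + k) - u / (u + (k + 1))) = 1 - u / (u + n) := by
    intro n
    have := sum_range_sub' (fun k : ℕ => u / (u + k)) n
    simpa only [Nat.cast_add, Nat.cast_one, Nat.cast_zero, add_zero, div_self hu.ne'] using this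
  simpa [hpartial] using (tendsto_const_nhds (x := (1 : ℝ))).sub hlim

theorem resolvent_coeff_mul_gaffney_weight_le {s D : ℝ} (hs : 0 ≤ s) (hD : 0 ≤ D) (N k : ℕ) :
    1 / (1 + s) * (s / (1 + s)) ^ k * (1 + D / (1 + k)) ^ (-(N : ℤ)) ≤
      2 ^ (N + 2) * (N + 2)! * (1 + D / (1 + s)) ^ (-(N : ℤ)) *
        ((1 + s) / (1 + s + k) - (1 + s) / (1 + s + (k + 1))) := by
  set u := 1 + s
  have hu : 0 < u := by positivity
  set a := 1 + D / (1 + k)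
  set b := 1 + D / u
  set x := 1 + (1 + k) / u
  have ha : 0 < a := by positivity
  have hb : 0 < b := by positivity
  have hx : 0 < x := by positivity
  have hsplit : b ≤ a * x := by
    have : a * x = b + (1 + k) / u + D / (1 + k) := by
      simp only [a, b, x]; field_simp; ring
    rw [this]
    linarith [show 0 ≤ (1 + k) / u by positivity, show 0 ≤ D / (1 + k) by positivity]
  have hweight : 1 / (u * x ^ 2) ≤ u / (u + k) - u / (u + (k + 1)) := by
    have e : u / (u + k) - u / (u + (k + 1)) = u / ((u + k) * (u + k + 1)) := by
      field_simp; ring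
    have e' : 1 / (u * x ^ 2) = u / (u + k + 1) ^ 2 := by
      simp only [x]; field_simp; ring
    rw [e, e']
    exact div_le_div_of_nonneg_left hu.le (by positivity) (by nlinarith)
  have hshift : (a ^ N)⁻¹ ≤ x ^ N * (b ^ N)⁻¹ := by
    calc (a ^ N)⁻¹ = x ^ N * ((a * x) ^ N)⁻¹ := by rw [mul_pow]; field_simp
      _ ≤ x ^ N * (b ^ N)⁻¹ := mul_le_mul_of_nonneg_left
          (inv_anti₀ (pow_pos hb N) (pow_le_pow_left₀ hb.le hsplit N)) (by positivity)
  simp only [zpow_neg, zpow_natCast]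
  calc 1 / u * (s / u) ^ k * (a ^ N)⁻¹ ≤ 1 / u * (s / u) ^ k * (x ^ N * (b ^ N)⁻¹) :=
        mul_le_mul_of_nonneg_left hshift (by positivity)
    _ = (s / u) ^ k * x ^ (N + 2) * (b ^ N)⁻¹ * (1 / (u * x ^ 2)) := by
        field_simp; ring
    _ ≤ 2 ^ (N + 2) * (N + 2)! * (b ^ N)⁻¹ * (u / (u + k) - u / (u + (k + 1))) := by
        have hdecay := div_one_add_pow_mul_one_add_pow_le hs k (N + 2)
        exact mul_le_mul (mul_le_mul_of_nonneg_right hdecay (by positivity)) hweight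
          (by positivity) (by positivity)

theorem ContinuousLinearMap.norm_pow_le_one {𝕜 E : Type*} [NontriviallyNormedField 𝕜]
    [SeminormedAddCommGroup E] [NormedSpace 𝕜 E] {P : E →L[𝕜] E} (hP : ‖P‖ ≤ 1) (k : ℕ) :
    ‖P ^ k‖ ≤ 1 := by
  induction k with
  | zero => exact norm_id_le
  | succ k ih => rw [pow_succ]; exact (norm_mul_le _ _).trans (mul_le_one₀ ih (norm_nonneg _) hP)

theorem ContinuousLinearMap.summable_smul_pow {𝕜 E : Type*} [NontriviallyNormedField 𝕜]
    [NormedAddCommGroup E] [NormedSpace 𝕜 E] [CompleteSpace E] {P : E →L[𝕜] E} (hP : ‖P‖ ≤ 1)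
    {c : ℕ → 𝕜} (hc : Summable (‖c ·‖)) : Summable fun k => c k • P ^ k :=
  hc.of_norm_bounded fun k =>
    (norm_smul_le _ _).trans (mul_le_of_le_one_right (norm_nonneg _) (norm_pow_le_one hP k))

theorem ContinuousLinearMap.norm_apply_tsum_apply_le {ι 𝕜 E F G : Type*}
    [NontriviallyNormedField 𝕜] [SeminormedAddCommGroup E] [NormedSpace 𝕜 E]
    [NormedAddCommGroup F] [NormedSpace 𝕜 F] [NormedAddCommGroup G] [NormedSpace 𝕜 G]
    (A : F →L[𝕜] G) {T : ι → E →L[𝕜] F} (hT : Summable T) (x : E) {g : ι → ℝ} {a : ℝ}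
    (hg : HasSum g a) (hbound : ∀ i, ‖A (T i x)‖ ≤ g i) : ‖A ((∑' i, T i) x)‖ ≤ a := by
  have happly : (∑' i, T i) x = ∑' i, T i x := (apply 𝕜 F x).map_tsum hT
  have hTx : Summable fun i => T i x := hT.mapL (apply 𝕜 F x)
  rw [happly, A.map_tsum hTx]
  exact tsum_of_norm_bounded hg hbound

theorem norm_apply_resolvent_series_apply_le {E F : Type*} [NormedAddCommGroup E]
    [NormedSpace ℝ E] [CompleteSpace E] [NormedAddCommGroup F] [NormedSpace ℝ F]
    {P : E →L[ℝ] E} (hP : ‖P‖ ≤ 1) (A : E →L[ℝ] F) (x : E) {s D M : ℝ} (hs : 0 ≤ s)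
    (hD : 0 ≤ D) (hM : 0 ≤ M) {N : ℕ}
    (hdecay : ∀ k : ℕ, ‖A ((P ^ k) x)‖ ≤ M * (1 + D / (1 + k)) ^ (-(N : ℤ))) :
    ‖A ((∑' k : ℕ, (1 / (1 + s) * (s / (1 + s)) ^ k) • P ^ k) x)‖ ≤
      M * (2 ^ (N + 2) * (N + 2)!) * (1 + D / (1 + s)) ^ (-(N : ℤ)) := by
  set c : ℕ → ℝ := fun k => 1 / (1 + s) * (s / (1 + s)) ^ k
  have hc0 : ∀ k, 0 ≤ c k := fun k => by positivity
  have hc : Summable (‖c ·‖) := by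
    have hratio : s / (1 + s) < 1 := by rw [div_lt_one (by positivity)]; linarith
    simpa only [norm_of_nonneg (hc0 _)] using
      (summable_geometric_of_lt_one (by positivity) hratio).mul_left (1 / (1 + s))
  rw [← mul_one (M * _ * _)]
  refine A.norm_apply_tsum_apply_le (ContinuousLinearMap.summable_smul_pow hP hc) x
    ((hasSum_div_add_sub_div_add_succ (u := 1 + s) (by positivity)).mul_left _) fun k => ?_
  calc ‖A ((c k • P ^ k) x)‖ = c k * ‖A ((P ^ k) x)‖ := by
        rw [smul_apply, map_smul, norm_smul, norm_of_nonneg (hc0 k)]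
    _ ≤ c k * (M * (1 + D / (1 + k)) ^ (-(N : ℤ))) := mul_le_mul_of_nonneg_left (hdecay k) (hc0 k)
    _ = M * (c k * (1 + D / (1 + k)) ^ (-(N : ℤ))) := by ring
    _ ≤ M * (2 ^ (N + 2) * (N + 2)! * (1 + D / (1 + s)) ^ (-(N : ℤ)) *
          ((1 + s) / (1 + s + k) - (1 + s) / (1 + s + (k + 1)))) :=
        mul_le_mul_of_nonneg_left (resolvent_coeff_mul_gaffney_weight_le hs hD N k) hM
    _ = _ := by ring

theorem stmt_13_general {H : Type*} [NormedAddCommGroup H] [InnerProductSpace ℝ H] [CompleteSpace H]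
    (P : H →L[ℝ] H) (hP : ‖P‖ ≤ 1)
    (A B : H →L[ℝ] H) (D : ℝ) (hD : 0 ≤ D)
    (hGaffney : ∀ N : ℕ, ∃ C : ℝ, 0 < C ∧ ∀ k : ℕ, ∀ f : H,
      ‖A ((P ^ k) (B f))‖ ≤ C * (1 + D / (1 + (k : ℝ))) ^ (-(N : ℤ)) * ‖f‖) :
    ∀ N : ℕ, ∃ C' : ℝ, 0 < C' ∧ ∀ s : ℝ, 0 < s → ∀ f : H,
      ‖A ((1 - ∑' k : ℕ, (1 / (1 + s) * (s / (1 + s)) ^ k) • P ^ k) (B f))‖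
        ≤ C' * (1 + D / (1 + s)) ^ (-(N : ℤ)) * ‖f‖ := by
  intro N
  obtain ⟨C, hC, hG⟩ := hGaffney N
  set Cm : ℝ := 2 ^ (N + 2) * (N + 2)!
  refine ⟨C * (1 + Cm), by positivity, fun s hs f => ?_⟩
  set δ := (1 + D / (1 + s)) ^ (-(N : ℤ))
  have hidentity : ‖A (B f)‖ ≤ C * δ * ‖f‖ := by
    have hδ : (1 + D) ^ (-(N : ℤ)) ≤ δ := by
      simp only [δ, zpow_neg, zpow_natCast]
      refine inv_anti₀ (by positivity) (pow_le_pow_left₀ (by positivity) ?_ N)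
      linarith [div_le_self hD (by linarith : 1 ≤ 1 + s)]
    have hG0 := hG 0 f
    simp only [pow_zero, one_apply_eq_self, Nat.cast_zero, add_zero, div_one] at hG0
    exact hG0.trans (by gcongr)
  have hseries : ‖A ((∑' k : ℕ, (1 / (1 + s) * (s / (1 + s)) ^ k) • P ^ k) (B f))‖ ≤
      C * ‖f‖ * Cm * δ :=
    norm_apply_resolvent_series_apply_le hP A (B f) hs.le hD (by positivity)
      fun k => (hG k f).trans_eq (by ring)
  calc _ ≤ ‖A (B f)‖ + ‖A ((∑' k : ℕ, (1 / (1 + s) * (s / (1 + s)) ^ k) • P ^ k) (B f))‖ := by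
        rw [sub_apply, one_apply_eq_self, map_sub]; exact norm_sub_le _ _
    _ ≤ C * δ * ‖f‖ + C * ‖f‖ * Cm * δ := add_le_add hidentity hseries
    _ = C * (1 + Cm) * δ * ‖f‖ := by ring

/-- If the powers `P^k` of a self-adjoint Markov (contraction) operator satisfy `L²`
Gaffney estimates with respect to localizations `A` (to `E`), `B` (to `F`) at
separation `D`, then so does the family `I - (I + sΔ)⁻¹`, `s > 0`, where
`(I + sΔ)⁻¹ = ∑_k (1/(1+s)) (s/(1+s))^k P^k`. -/
theorem stmt_13 {H : Type*} [NormedAddCommGroup H] [InnerProductSpace ℝ H] [CompleteSpace H]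
    (P : H →L[ℝ] H) (hP : ‖P‖ ≤ 1) (hPsa : IsSelfAdjoint P)
    (A B : H →L[ℝ] H) (D : ℝ) (hD : 0 ≤ D)
    (hGaffney : ∀ N : ℕ, ∃ C : ℝ, 0 < C ∧ ∀ k : ℕ, ∀ f : H,
      ‖A ((P ^ k) (B f))‖ ≤ C * (1 + D / (1 + (k : ℝ))) ^ (-(N : ℤ)) * ‖f‖) :
    ∀ N : ℕ, ∃ C' : ℝ, 0 < C' ∧ ∀ s : ℝ, 0 < s → ∀ f : H,
      ‖A ((1 - ∑' k : ℕ, (1 / (1 + s) * (s / (1 + s)) ^ k) • P ^ k) (B f))‖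
        ≤ C' * (1 + D / (1 + s)) ^ (-(N : ℤ)) * ‖f‖ :=
  stmt_13_general P hP A B D hD hGaffney
end

section
/- Let $P$ be a self-adjoint operator on $L^2$ with spectrum contained in $(a, 1]$ for some $a > -1$, and $\Delta = I - P$. Then for every integer $t \ge 0$ there is a constant $C$ such that for every $k \ge 1$ and $h \in L^2$, $\frac{1}{k}\sum_{l=1}^{k} l^{2(1+t)}\|(I + k\Delta)^{1/2}\Delta^{1+t}P^{l-1}h\|_{L^2}^2 \le C\|h\|_{L^2}^2$. -/
/-!
The left side is `⟪G(P) h, h⟫` for an explicit real polynomial `G`. For self-adjoint `P` on a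
real Hilbert space, `σ(q(P)) ⊆ q(σ(P))`: factor `q` into real linear and quadratic irreducibles,
each of which is invertible at `P` when it has no zero on `σ(P)`. A self-adjoint operator with
spectrum in `(-∞, c]` has quadratic form at most `c‖h‖²`, because its norm is its spectral
radius. So it suffices to bound `G` on `(a, 1]`: with `y = 1 - x` and `u = x²` one has
`(1 + a) y ≤ 1 - u`, and `(1 - u)^(n+1) ∑_{l<k} (l+1)^n u^l ≤ n!` by a telescoping induction
on `n`.
-/

open Finset Polynomial ContinuousLinearMap
open scoped Nat ENNReal RealInnerProductSpace

lemma one_sub_mul_sum_range_pow_mul_pow_le (n k : ℕ) {u : ℝ} (hu : 0 ≤ u) :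
    (1 - u) * ∑ l ∈ range k, ((l : ℝ) + 1) ^ (n + 1) * u ^ l
      ≤ (n + 1) * ∑ l ∈ range k, ((l : ℝ) + 1) ^ n * u ^ l := by
  have hshift : ∑ l ∈ range k, ((l : ℝ) + 1) ^ (n + 1) * u ^ (l + 1)
      = ∑ l ∈ range k, (l : ℝ) ^ (n + 1) * u ^ l + (k : ℝ) ^ (n + 1) * u ^ k := by
    rw [← sum_range_succ, sum_range_succ']
    simp
  have hdiff (l : ℕ) :
      ((l : ℝ) + 1) ^ (n + 1) - (l : ℝ) ^ (n + 1) ≤ (n + 1) * ((l : ℝ) + 1) ^ n := by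
    have h := abs_pow_sub_pow_le ((l : ℝ) + 1) l (n + 1)
    have hmax : max |(l : ℝ) + 1| |(l : ℝ)| = l + 1 := by
      rw [abs_of_nonneg (by positivity), abs_of_nonneg (by positivity)]
      exact max_eq_left (by linarith)
    rw [hmax, add_sub_cancel_left, abs_one, one_mul, Nat.add_sub_cancel] at h
    push_cast at h
    exact (le_abs_self _).trans h
  calc (1 - u) * ∑ l ∈ range k, ((l : ℝ) + 1) ^ (n + 1) * u ^ l
      = ∑ l ∈ range k, (((l : ℝ) + 1) ^ (n + 1) - (l : ℝ) ^ (n + 1)) * u ^ l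
          - (k : ℝ) ^ (n + 1) * u ^ k := by
        have hmul : ∑ l ∈ range k, u * (((l : ℝ) + 1) ^ (n + 1) * u ^ l)
            = ∑ l ∈ range k, ((l : ℝ) + 1) ^ (n + 1) * u ^ (l + 1) :=
          sum_congr rfl fun l _ => by ring
        simp only [sub_mul, one_mul, mul_sum, hmul, hshift, sum_sub_distrib]
        ring
    _ ≤ ∑ l ∈ range k, (n + 1) * ((l : ℝ) + 1) ^ n * u ^ l := by
        have : 0 ≤ (k : ℝ) ^ (n + 1) * u ^ k := by positivity
        have := sum_le_sum fun l (_ : l ∈ range k) =>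
          mul_le_mul_of_nonneg_right (hdiff l) (pow_nonneg hu l)
        linarith
    _ = (n + 1) * ∑ l ∈ range k, ((l : ℝ) + 1) ^ n * u ^ l := by
        rw [mul_sum]; simp only [mul_assoc]

lemma one_sub_pow_mul_sum_range_le_factorial (n k : ℕ) {u : ℝ} (hu₀ : 0 ≤ u) (hu₁ : u ≤ 1) :
    (1 - u) ^ (n + 1) * ∑ l ∈ range k, ((l : ℝ) + 1) ^ n * u ^ l ≤ n ! := by
  induction n with
  | zero =>
    simp only [zero_add, pow_one, pow_zero, one_mul, Nat.factorial_zero, Nat.cast_one]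
    rw [mul_comm, geom_sum_mul_neg]
    linarith [pow_nonneg hu₀ k]
  | succ n ih =>
    calc (1 - u) ^ (n + 1 + 1) * ∑ l ∈ range k, ((l : ℝ) + 1) ^ (n + 1) * u ^ l
        = (1 - u) ^ (n + 1) * ((1 - u) * ∑ l ∈ range k, ((l : ℝ) + 1) ^ (n + 1) * u ^ l) := by
          ring
      _ ≤ (1 - u) ^ (n + 1) * ((n + 1) * ∑ l ∈ range k, ((l : ℝ) + 1) ^ n * u ^ l) :=
          mul_le_mul_of_nonneg_left (one_sub_mul_sum_range_pow_mul_pow_le n k hu₀)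
            (pow_nonneg (by linarith) _)
      _ = (n + 1) * ((1 - u) ^ (n + 1) * ∑ l ∈ range k, ((l : ℝ) + 1) ^ n * u ^ l) := by ring
      _ ≤ (n + 1) * n ! := by gcongr
      _ = (n + 1) ! := by push_cast [Nat.factorial_succ]; ring

lemma pow_mul_sum_range_pow_mul_pow_le (n k : ℕ) {c y u : ℝ} (hc : 0 < c) (hy : 0 ≤ y)
    (hu₀ : 0 ≤ u) (hu₁ : u ≤ 1) (hcy : c * y ≤ 1 - u) :
    y ^ (n + 1) * ∑ l ∈ range k, ((l : ℝ) + 1) ^ n * u ^ l ≤ n ! / c ^ (n + 1) := by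
  rw [le_div_iff₀ (by positivity), mul_right_comm, ← mul_pow, mul_comm y]
  exact (mul_le_mul_of_nonneg_right (pow_le_pow_left₀ (by positivity) hcy _)
    (sum_nonneg fun l _ => by positivity)).trans
    (one_sub_pow_mul_sum_range_le_factorial n k hu₀ hu₁)

lemma one_div_mul_sum_Icc_le_of_mem_Ioc (t k : ℕ) (hk : 1 ≤ k) {a x : ℝ} (ha : -1 < a)
    (hx : x ∈ Set.Ioc a 1) :
    (1 / (k : ℝ)) * ∑ l ∈ Icc 1 k, (l : ℝ) ^ (2 * (1 + t)) *
        ((1 + k * (1 - x)) * ((1 - x) ^ (1 + t) * x ^ (l - 1)) ^ 2)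
      ≤ (2 * t + 1) ! / (1 + a) ^ (2 * t + 2) + (2 * t + 2) ! / (1 + a) ^ (2 * t + 3) := by
  obtain ⟨hax, hx1⟩ := hx
  set y := 1 - x
  set u := x ^ 2
  have hk' : (0 : ℝ) < k := by exact_mod_cast hk
  have hy : 0 ≤ y := by linarith
  have hu₁ : u ≤ 1 := by nlinarith
  have hcy : (1 + a) * y ≤ 1 - u := by nlinarith
  set A := ∑ i ∈ range k, ((i : ℝ) + 1) ^ (2 * t + 2) * u ^ i
  have hreindex : ∑ l ∈ Icc 1 k, (l : ℝ) ^ (2 * (1 + t)) *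
      ((1 + k * y) * (y ^ (1 + t) * x ^ (l - 1)) ^ 2) = (1 + k * y) * (y ^ (2 * t + 2) * A) := by
    rw [← Ico_add_one_right_eq_Icc, ← sum_Ico_add' (c := 1) (a := 0), ← range_eq_Ico, mul_sum,
      mul_sum]
    refine sum_congr rfl fun i _ => ?_
    rw [Nat.add_sub_cancel, show 2 * (1 + t) = 2 * t + 2 by ring]
    push_cast
    ring
  have hA : (1 / (k : ℝ)) * (y ^ (2 * t + 2) * A)
      ≤ y ^ (2 * t + 2) * ∑ i ∈ range k, ((i : ℝ) + 1) ^ (2 * t + 1) * u ^ i := by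
    rw [mul_left_comm, mul_sum]
    refine mul_le_mul_of_nonneg_left (sum_le_sum fun i hi => ?_) (pow_nonneg hy _)
    have hik : (i : ℝ) + 1 ≤ k := by exact_mod_cast mem_range.mp hi
    rw [div_mul_eq_mul_div, one_mul, div_le_iff₀ hk', pow_succ]
    have : 0 ≤ ((i : ℝ) + 1) ^ (2 * t + 1) * u ^ i := by positivity
    nlinarith
  rw [hreindex]
  calc (1 / (k : ℝ)) * ((1 + k * y) * (y ^ (2 * t + 2) * A))
      = (1 / (k : ℝ)) * (y ^ (2 * t + 2) * A) + y ^ (2 * t + 2 + 1) * A := by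
        field_simp; ring
    _ ≤ _ := by
        have hc : 0 < 1 + a := by linarith
        exact add_le_add
          (hA.trans (pow_mul_sum_range_pow_mul_pow_le _ k hc hy (sq_nonneg x) hu₁ hcy))
          (pow_mul_sum_range_pow_mul_pow_le _ k hc hy (sq_nonneg x) hu₁ hcy)

lemma isSelfAdjoint_aeval {A : Type*} [Ring A] [StarRing A] [Algebra ℝ A] [StarModule ℝ A]
    {a : A} (ha : IsSelfAdjoint a) (q : ℝ[X]) : IsSelfAdjoint (aeval a q) := by
  induction q using Polynomial.induction_on' with
  | add p q hp hq => rw [map_add]; exact hp.add hq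
  | monomial n c =>
    rw [aeval_monomial, ← Algebra.smul_def]
    exact .smul (star_trivial c) (ha.pow n)

namespace IsSelfAdjoint

variable {H : Type*} [NormedAddCommGroup H] [InnerProductSpace ℝ H] [CompleteSpace H]
  {T : H →L[ℝ] H}

lemma inner_apply_self_nonneg_of_spectrum_nonneg (hT : IsSelfAdjoint T)
    (hσ : spectrum ℝ T ⊆ Set.Ici 0) (x : H) : 0 ≤ ⟪T x, x⟫ := by
  set c := ‖T‖ * ‖(1 : H →L[ℝ] H)‖
  set S := algebraMap ℝ _ c - T
  have hσS : ∀ μ ∈ spectrum ℝ S, ‖μ‖ ≤ c := by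
    rw [← spectrum.singleton_sub_eq]
    rintro _ ⟨_, rfl, ν, hν, rfl⟩
    have h₀ : 0 ≤ ν := hσ hν
    have h₁ := spectrum.norm_le_norm_mul_of_mem hν
    rw [Real.norm_eq_abs, abs_le] at h₁ ⊢
    constructor <;> dsimp only <;> linarith
  have hc : 0 ≤ c := by positivity
  have hS : ‖S‖ ≤ c := by
    have h : (‖S‖₊ : ℝ≥0∞) ≤ c.toNNReal := by
      rw [← ContinuousLinearMap.spectralRadius_eq_nnnorm _
        ((IsSelfAdjoint.algebraMap _ (.all c)).sub hT)]
      exact iSup₂_le fun μ hμ =>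
        ENNReal.coe_le_coe.mpr ((Real.le_toNNReal_iff_coe_le hc).mpr (hσS μ hμ))
    exact (Real.le_toNNReal_iff_coe_le hc).mp (ENNReal.coe_le_coe.mp h)
  have hSx : ⟪S x, x⟫ = c * ‖x‖ ^ 2 - ⟪T x, x⟫ := by
    simp [S, inner_sub_left, Algebra.algebraMap_eq_smul_one, real_inner_smul_left]
  have := (real_inner_le_norm (S x) x).trans
    (mul_le_mul_of_nonneg_right ((S.le_opNorm x).trans (by gcongr)) (norm_nonneg x))
  nlinarith

lemma nonempty_spectrum [Nontrivial (H →L[ℝ] H)] (hT : IsSelfAdjoint T) :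
    (spectrum ℝ T).Nonempty := by
  by_contra hempty
  rw [Set.not_nonempty_iff_eq_empty] at hempty
  have hT0 : T = 0 := by
    have h := ContinuousLinearMap.spectralRadius_eq_nnnorm _ hT
    rw [spectralRadius, hempty] at h
    simpa using h.symm
  simp [hT0, spectrum.zero_eq] at hempty

lemma isUnit_aeval_sq_add (hT : IsSelfAdjoint T) (α : ℝ) {β : ℝ} (hβ : β ≠ 0) :
    IsUnit (aeval T ((X - C α) ^ 2 + C (β ^ 2))) := by
  set S := T - algebraMap ℝ _ α
  have hS : IsSelfAdjoint S := hT.sub (IsSelfAdjoint.algebraMap _ (.all α))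
  have hform : ∀ x, ⟪aeval T ((X - C α) ^ 2 + C (β ^ 2)) x, x⟫ = ‖S x‖ ^ 2 + β ^ 2 * ‖x‖ ^ 2 := by
    intro x
    have hSS : ⟪S (S x), x⟫ = ‖S x‖ ^ 2 := by
      rw [← real_inner_self_eq_norm_sq]; exact hS.isSymmetric (S x) x
    have hA : aeval T ((X - C α) ^ 2 + C (β ^ 2)) = S * S + algebraMap ℝ _ (β ^ 2) := by
      rw [map_add, map_pow, map_sub, aeval_X, aeval_C, aeval_C, sq]
    rw [hA, add_apply, mul_apply_eq_comp, inner_add_left, hSS,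
      Algebra.algebraMap_eq_smul_one, smul_apply, one_apply_eq_self, real_inner_smul_left,
      real_inner_self_eq_norm_sq]
  refine ContinuousLinearMap.isUnit_of_forall_le_norm_inner_map _
    (c := ⟨β ^ 2, sq_nonneg β⟩) (pow_pos (abs_pos.mpr hβ) 2 |>.trans_eq (sq_abs β)) fun x => ?_
  rw [hform, Real.norm_eq_abs]
  change ‖x‖ ^ 2 * β ^ 2 ≤ _
  nlinarith [le_abs_self (‖S x‖ ^ 2 + β ^ 2 * ‖x‖ ^ 2), sq_nonneg ‖S x‖]

lemma isUnit_aeval_of_irreducible (hT : IsSelfAdjoint T) {p : ℝ[X]} (hp : Irreducible p)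
    (hroot : ∀ μ ∈ spectrum ℝ T, p.eval μ ≠ 0) : IsUnit (aeval T p) := by
  -- A complex root `z` of `p` yields a non-unit factor `q` with `q(T)` invertible (`X - z` if
  -- `z` is real, `(X - re z)² + (im z)²` otherwise); by irreducibility the cofactor is a unit.
  obtain ⟨z, hz⟩ : ∃ z : ℂ, aeval z p = 0 :=
    IsAlgClosed.exists_aeval_eq_zero _ p (degree_pos_of_irreducible hp).ne'
  obtain ⟨q, hqp, hq, hTq⟩ : ∃ q : ℝ[X], q ∣ p ∧ ¬IsUnit q ∧ IsUnit (aeval T q) := by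
    rcases eq_or_ne z.im 0 with him | him
    · have hre : p.eval z.re = 0 := by
        have : algebraMap ℝ ℂ z.re = z := by simp [Complex.ext_iff, him]
        rw [← this, aeval_algebraMap_apply_eq_algebraMap_eval] at hz
        exact (map_eq_zero_iff _ (algebraMap ℝ ℂ).injective).mp hz
      refine ⟨X - C z.re, dvd_iff_isRoot.mpr hre, not_isUnit_X_sub_C _, ?_⟩
      rw [map_sub, aeval_X, aeval_C, ← neg_sub]
      exact (spectrum.notMem_iff.mp fun hmem => hroot _ hmem hre).neg
    · have hquad : X ^ 2 - C (2 * z.re) * X + C (‖z‖ ^ 2) = (X - C z.re) ^ 2 + C (z.im ^ 2) := by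
        rw [Complex.sq_norm, Complex.normSq_apply]
        simp only [map_add, map_mul, map_pow, map_ofNat]; ring
      refine ⟨_, hquad ▸ p.quadratic_dvd_of_aeval_eq_zero_im_ne_zero hz him, ?_,
        hT.isUnit_aeval_sq_add z.re him⟩
      exact not_isUnit_of_natDegree_pos _
        (by rw [natDegree_add_C, natDegree_pow, natDegree_X_sub_C]; norm_num)
  obtain ⟨w, rfl⟩ := hqp
  rw [map_mul]
  exact hTq.mul ((hp.isUnit_or_isUnit rfl).resolve_left hq |>.map _)

lemma isUnit_aeval_of_forall_eval_ne_zero (hT : IsSelfAdjoint T) {q : ℝ[X]} (hq : q ≠ 0)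
    (hroot : ∀ μ ∈ spectrum ℝ T, q.eval μ ≠ 0) : IsUnit (aeval T q) := by
  induction q using WfDvdMonoid.induction_on_irreducible with
  | zero => exact absurd rfl hq
  | unit u hu => exact hu.map _
  | mul a p ha hp ih =>
    simp only [eval_mul, ne_eq, mul_eq_zero, not_or] at hroot
    rw [map_mul]
    exact (hT.isUnit_aeval_of_irreducible hp fun μ hμ => (hroot μ hμ).1).mul
      (ih ha fun μ hμ => (hroot μ hμ).2)

lemma spectrum_aeval_subset (hT : IsSelfAdjoint T) (q : ℝ[X]) :
    spectrum ℝ (aeval T q) ⊆ (fun x => q.eval x) '' spectrum ℝ T := by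
  intro μ hμ
  by_contra hμq
  have hroot : ∀ ν ∈ spectrum ℝ T, (C μ - q).eval ν ≠ 0 := fun ν hν h =>
    hμq ⟨ν, hν, (sub_eq_zero.mp (by simpa using h)).symm⟩
  have hunit : ¬IsUnit (aeval T (C μ - q)) := by
    rwa [map_sub, aeval_C, ← spectrum.mem_iff]
  rcases eq_or_ne (C μ - q) 0 with h0 | h0
  · -- `q` is the constant `μ`, so `μ ∈ q(σ T)` as soon as `σ T` is nonempty.
    have : Nontrivial (H →L[ℝ] H) := not_subsingleton_iff_nontrivial.mp fun _ =>
      hunit (isUnit_of_subsingleton _)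
    obtain ⟨ν, hν⟩ := hT.nonempty_spectrum
    exact hroot ν hν (by rw [h0, eval_zero])
  · exact hunit (hT.isUnit_aeval_of_forall_eval_ne_zero h0 hroot)

lemma inner_aeval_le (hT : IsSelfAdjoint T) {q : ℝ[X]} {c : ℝ}
    (hq : ∀ μ ∈ spectrum ℝ T, q.eval μ ≤ c) (x : H) : ⟪aeval T q x, x⟫ ≤ c * ‖x‖ ^ 2 := by
  have hσ : spectrum ℝ (aeval T (C c - q)) ⊆ Set.Ici 0 := by
    refine (hT.spectrum_aeval_subset _).trans ?_
    rintro _ ⟨ν, hν, rfl⟩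
    simpa using hq ν hν
  have h := (isSelfAdjoint_aeval hT _).inner_apply_self_nonneg_of_spectrum_nonneg hσ x
  rw [map_sub, aeval_C, sub_apply, inner_sub_left, Algebra.algebraMap_eq_smul_one, smul_apply,
    one_apply_eq_self, real_inner_smul_left, real_inner_self_eq_norm_sq] at h
  linarith

lemma inner_aeval_mul_aeval (hT : IsSelfAdjoint T) (M p : ℝ[X]) (x : H) :
    ⟪(aeval T M * aeval T p) x, aeval T p x⟫ = ⟪aeval T (M * p ^ 2) x, x⟫ := by
  have h := (isSelfAdjoint_aeval hT p).isSymmetric ((aeval T M * aeval T p) x) x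
  simp only [coe_coe] at h
  rw [← h, show M * p ^ 2 = p * (M * p) by ring, map_mul, map_mul]
  rfl

end IsSelfAdjoint

/-- For `P` self-adjoint on `L²` with spectrum in `(a, 1]`, `a > -1`, and `Δ = I - P`,
for every `t ∈ ℕ` there is `C` with
`(1/k) ∑_{l=1}^k l^{2(1+t)} ‖(I + kΔ)^{1/2} Δ^{1+t} P^{l-1} h‖² ≤ C ‖h‖²`,
the square of the norm written as `⟨(I + kΔ) g, g⟩`. -/
theorem stmt_16 {H : Type*} [NormedAddCommGroup H] [InnerProductSpace ℝ H] [CompleteSpace H]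
    (P : H →L[ℝ] H) (hPsa : IsSelfAdjoint P) (a : ℝ) (ha : -1 < a)
    (hspec : spectrum ℝ P ⊆ Set.Ioc a 1) :
    ∀ t : ℕ, ∃ C : ℝ, 0 < C ∧ ∀ k : ℕ, 1 ≤ k → ∀ h : H,
      (1 / (k : ℝ)) * ∑ l ∈ Finset.Icc 1 k, (l : ℝ) ^ (2 * (1 + t)) *
          (@inner ℝ H _
            (((1 + (k : ℝ) • (1 - P)) * ((1 - P) ^ (1 + t) * P ^ (l - 1))) h)
            (((1 - P) ^ (1 + t) * P ^ (l - 1)) h))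
        ≤ C * ‖h‖ ^ 2 := by
  intro t
  have ha' : 0 < 1 + a := by linarith
  refine ⟨(2 * t + 1) ! / (1 + a) ^ (2 * t + 2) + (2 * t + 2) ! / (1 + a) ^ (2 * t + 3),
    by positivity, fun k hk h => ?_⟩
  set M : ℝ[X] := 1 + C (k : ℝ) * (1 - X)
  set p : ℕ → ℝ[X] := fun l => (1 - X) ^ (1 + t) * X ^ (l - 1)
  have hterm (l : ℕ) : ⟪((1 + (k : ℝ) • (1 - P)) * ((1 - P) ^ (1 + t) * P ^ (l - 1))) h,
      ((1 - P) ^ (1 + t) * P ^ (l - 1)) h⟫ = ⟪aeval P (M * p l ^ 2) h, h⟫ := by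
    rw [← hPsa.inner_aeval_mul_aeval]
    simp [M, p, Algebra.smul_def]
  simp_rw [hterm]
  calc _ = ⟪aeval P ((1 / (k : ℝ)) • ∑ l ∈ Icc 1 k, ((l : ℝ) ^ (2 * (1 + t))) • (M * p l ^ 2))
          h, h⟫ := by
        simp only [map_smul, map_sum, smul_apply, _root_.sum_apply, real_inner_smul_left, sum_inner]
    _ ≤ _ := hPsa.inner_aeval_le (fun x hx => by
        simpa only [M, p, eval_smul, eval_finsetSum, eval_mul, eval_pow, eval_add, eval_sub,
          eval_one, eval_X, eval_C, smul_eq_mul]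
          using one_div_mul_sum_Icc_le_of_mem_Ioc t k hk ha (hspec hx)) h
end

section
/- Let $\Gamma$ be a graph satisfying doubling (D$_\beta$) and the pointwise upper bound (UE$_\beta$): for every $N$, $p_{k-1}(x,y) \le \frac{C_N}{V_\rho(x,k)}(1+\rho(x,y)/k)^{-N}$. Then the matching on-diagonal lower bound holds: $p_{2k}(x,x) \ge \frac{c}{V_\rho(x,k)}$ for all $x \in \Gamma$ and $k \ge 1$; consequently $p_{2k}(x,x) \simeq V_\rho(x,k)^{-1}$. -/
/-- The weight `m(x) = ∑_y μ_{xy}` of a vertex of a weighted graph. -/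
noncomputable def graphMeasure {Γ : Type*} (μ : Γ → Γ → ℝ) (x : Γ) : ℝ := ∑' y, μ x y

/-- The reversible Markov kernel `p(x,y) = μ_{xy}/(m(x)m(y))`. -/
noncomputable def graphKernel {Γ : Type*} (μ : Γ → Γ → ℝ) (x y : Γ) : ℝ :=
  μ x y / (graphMeasure μ x * graphMeasure μ y)

open Classical in
/-- The iterated kernels. -/
noncomputable def iterKernel {Γ : Type*} (μ : Γ → Γ → ℝ) : ℕ → Γ → Γ → ℝ
  | 0, x, y => (if x = y then 1 else 0) / graphMeasure μ y
  | k + 1, x, y => ∑' z, graphKernel μ x z * iterKernel μ k z y * graphMeasure μ z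

/-- The volume `V_ρ(x,r)` of the quasidistance ball with vertex weights `m`. -/
noncomputable def ballVol {Γ : Type*} (m : Γ → ℝ) (ρ : Γ → Γ → ℝ) (x : Γ) (r : ℝ) : ℝ :=
  ∑' y : {y : Γ // ρ x y < r}, m y.1

/-!
The upper bound is (UE) with `N = 0` at time `2k + 1`. For the lower bound, (UE) with a large `N`,
summed over dyadic shells with the help of doubling, shows that at most half of the mass of
`p_k(x, ·)` lies outside `B(x, Λk)` for a suitable constant `Λ`. Since `∑_y p_k(x,y) m(y) = 1`,
Cauchy–Schwarz on this ball and the semigroup identity `p_{2k}(x,x) = ∑_y p_k(x,y)² m(y)` give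
`1/4 ≤ p_{2k}(x,x) V(x, Λk) ≤ Cd Λ^d p_{2k}(x,x) V(x,k)`.
-/

section

open Finset

variable {Γ : Type*} {μ : Γ → Γ → ℝ}

section MarkovKernel

variable (hsym : ∀ x y, μ x y = μ y x) (hfin : ∀ x, {y | μ x y ≠ 0}.Finite)
  (hpos : ∀ x, 0 < graphMeasure μ x)

lemma graphKernel_eq_zero {x y : Γ} (h : μ x y = 0) : graphKernel μ x y = 0 := by
  simp [graphKernel, h]

include hsym in
lemma graphKernel_comm (x y : Γ) : graphKernel μ x y = graphKernel μ y x := by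
  simp [graphKernel, hsym x y, mul_comm]

include hpos in
lemma tsum_graphKernel_mul_graphMeasure (x : Γ) :
    ∑' z, graphKernel μ x z * graphMeasure μ z = 1 := by
  have h : ∀ z, graphKernel μ x z * graphMeasure μ z = μ x z / graphMeasure μ x := fun z => by
    rw [graphKernel]
    field_simp [(hpos x).ne', (hpos z).ne']
  simp_rw [h, tsum_div_const]
  exact div_self (hpos x).ne'

include hfin in
lemma tsum_graphKernel_mul (x : Γ) (f : Γ → ℝ) :
    ∑' z, graphKernel μ x z * f z = ∑ z ∈ (hfin x).toFinset, graphKernel μ x z * f z :=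
  tsum_eq_sum fun z hz => by rw [graphKernel_eq_zero (by simpa using hz), zero_mul]

lemma iterKernel_succ (k : ℕ) (x y : Γ) :
    iterKernel μ (k + 1) x y =
      ∑' z, graphKernel μ x z * (iterKernel μ k z y * graphMeasure μ z) := by
  simp only [iterKernel, mul_assoc]

include hpos in
lemma tsum_iterKernel_zero_mul (x : Γ) (f : Γ → ℝ) :
    ∑' y, iterKernel μ 0 x y * (f y * graphMeasure μ y) = f x := by
  rw [tsum_eq_single x fun y hy => by simp [iterKernel, Ne.symm hy]]
  simp only [iterKernel, if_true]
  field_simp [(hpos x).ne']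

include hpos in
lemma iterKernel_one (x y : Γ) : iterKernel μ 1 x y = graphKernel μ x y := by
  rw [iterKernel_succ, tsum_eq_single y fun z hz => by simp [iterKernel, hz]]
  simp only [iterKernel, if_true]
  field_simp [(hpos y).ne']

include hfin in
lemma finite_iterKernel_ne_zero (k : ℕ) (x : Γ) : {y | iterKernel μ k x y ≠ 0}.Finite := by
  induction k generalizing x with
  | zero =>
    refine (Set.finite_singleton x).subset fun y hy => ?_
    by_contra hxy
    simp [iterKernel, Ne.symm hxy] at hy
  | succ k ih =>
    refine ((hfin x).biUnion fun z _ => ih z).subset fun y hy => ?_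
    rw [Set.mem_ofPred_eq, iterKernel_succ, tsum_graphKernel_mul hfin] at hy
    obtain ⟨z, hz, hne⟩ := exists_ne_zero_of_sum_ne_zero hy
    exact Set.mem_biUnion (by simpa using hz) (left_ne_zero_of_mul (right_ne_zero_of_mul hne))

include hfin in
lemma summable_iterKernel_mul (k : ℕ) (x : Γ) (g : Γ → ℝ) :
    Summable fun y => iterKernel μ k x y * g y :=
  summable_of_ne_finset_zero (s := (finite_iterKernel_ne_zero hfin k x).toFinset) fun y hy => by
    rw [show iterKernel μ k x y = 0 by simpa using hy, zero_mul]

include hfin in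
lemma tsum_iterKernel_succ_mul (k : ℕ) (x : Γ) (g : Γ → ℝ) :
    ∑' y, iterKernel μ (k + 1) x y * g y =
      ∑' z, graphKernel μ x z * ((∑' y, iterKernel μ k z y * g y) * graphMeasure μ z) := by
  simp_rw [iterKernel_succ, tsum_graphKernel_mul hfin, sum_mul]
  rw [Summable.tsum_finsetSum fun z _ => ?_]
  · refine sum_congr rfl fun z _ => ?_
    rw [← tsum_mul_right, ← tsum_mul_left]
    exact tsum_congr fun y => by ring
  · simpa only [mul_comm, mul_left_comm] using
      (summable_iterKernel_mul hfin k z g).mul_left (graphKernel μ x z * graphMeasure μ z)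

include hfin hpos in
lemma tsum_iterKernel_mul_graphMeasure (k : ℕ) (x : Γ) :
    ∑' y, iterKernel μ k x y * graphMeasure μ y = 1 := by
  induction k generalizing x with
  | zero => simpa using tsum_iterKernel_zero_mul hpos x 1
  | succ k ih =>
    simp_rw [tsum_iterKernel_succ_mul hfin, ih, one_mul]
    exact tsum_graphKernel_mul_graphMeasure hpos x

include hfin hpos in
lemma iterKernel_add (a b : ℕ) (x y : Γ) :
    iterKernel μ (a + b) x y =
      ∑' z, iterKernel μ a x z * (iterKernel μ b z y * graphMeasure μ z) := by
  induction a generalizing x with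
  | zero => rw [zero_add, tsum_iterKernel_zero_mul hpos]
  | succ a ih =>
    simp_rw [tsum_iterKernel_succ_mul hfin, Nat.add_right_comm a 1 b, iterKernel_succ, ih]

include hsym hfin hpos in
lemma iterKernel_comm (k : ℕ) (x y : Γ) : iterKernel μ k x y = iterKernel μ k y x := by
  induction k generalizing x y with
  | zero =>
    by_cases hxy : x = y
    · rw [hxy]
    · simp [iterKernel, hxy, Ne.symm hxy]
  | succ k ih =>
    rw [iterKernel_succ, iterKernel_add hfin hpos k 1 y x]
    exact tsum_congr fun z => by rw [iterKernel_one hpos, graphKernel_comm hsym, ih]; ring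

include hsym hfin hpos in
lemma iterKernel_two_mul_self (k : ℕ) (x : Γ) :
    iterKernel μ (2 * k) x x = ∑' y, iterKernel μ k x y ^ 2 * graphMeasure μ y := by
  rw [two_mul, iterKernel_add hfin hpos]
  exact tsum_congr fun y => by rw [iterKernel_comm hsym hfin hpos k y x]; ring

include hsym hfin hpos in
lemma iterKernel_two_mul_self_pos (k : ℕ) (x : Γ) : 0 < iterKernel μ (2 * k) x x := by
  obtain ⟨y, hy⟩ : ∃ y, iterKernel μ k x y ≠ 0 := by
    by_contra! h
    simpa [h] using tsum_iterKernel_mul_graphMeasure hfin hpos k x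
  rw [iterKernel_two_mul_self hsym hfin hpos]
  refine Summable.tsum_pos ?_ (fun z => mul_nonneg (sq_nonneg _) (hpos z).le) y
    (mul_pos (by positivity) (hpos y))
  simpa only [sq, mul_assoc] using summable_iterKernel_mul hfin k x _

end MarkovKernel

section BallVolume

variable {m : Γ → ℝ} {ρ : Γ → Γ → ℝ} {x : Γ}

lemma ballVol_eq_tsum_indicator (r : ℝ) :
    ballVol m ρ x r = ∑' y, {y | ρ x y < r}.indicator m y :=
  tsum_subtype _ _

lemma ballVol_nonneg (hm : ∀ y, 0 ≤ m y) (r : ℝ) : 0 ≤ ballVol m ρ x r :=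
  tsum_nonneg fun y => hm y

lemma Summable.indicator_ball_of_le (hm : ∀ y, 0 ≤ m y) {r r' : ℝ} (h : r ≤ r')
    (hsum : Summable ({y | ρ x y < r'}.indicator m)) :
    Summable ({y | ρ x y < r}.indicator m) :=
  hsum.of_nonneg_of_le (Set.indicator_nonneg fun y _ => hm y)
    (Set.indicator_le_indicator_of_subset (fun _ hy => lt_of_lt_of_le hy h) hm)

lemma sum_le_ballVol (hm : ∀ y, 0 ≤ m y) {r : ℝ}
    (hsum : Summable ({y | ρ x y < r}.indicator m)) {s : Finset Γ}
    (hs : ∀ y ∈ s, ρ x y < r) : ∑ y ∈ s, m y ≤ ballVol m ρ x r := by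
  rw [ballVol_eq_tsum_indicator]
  calc ∑ y ∈ s, m y = ∑ y ∈ s, {y | ρ x y < r}.indicator m y :=
        sum_congr rfl fun y hy => (Set.indicator_of_mem (s := {y | ρ x y < r}) (hs y hy) m).symm
    _ ≤ _ := hsum.sum_le_tsum s fun y _ => Set.indicator_nonneg (fun z _ => hm z) y

lemma ballVol_mono (hm : ∀ y, 0 ≤ m y) {r r' : ℝ} (h : r ≤ r')
    (hsum : Summable ({y | ρ x y < r'}.indicator m)) : ballVol m ρ x r ≤ ballVol m ρ x r' := by
  simp_rw [ballVol_eq_tsum_indicator]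
  exact (hsum.indicator_ball_of_le hm h).tsum_le_tsum
    (Set.indicator_le_indicator_of_subset (fun _ hy => lt_of_lt_of_le hy h) hm) hsum

lemma ballVol_pos (hm : ∀ y, 0 ≤ m y) (hmx : 0 < m x) (hρ0 : ρ x x = 0) {r : ℝ} (hr : 0 < r)
    (hsum : Summable ({y | ρ x y < r}.indicator m)) : 0 < ballVol m ρ x r := by
  rw [ballVol_eq_tsum_indicator]
  refine hsum.tsum_pos (Set.indicator_nonneg fun y _ => hm y) x ?_
  rwa [Set.indicator_of_mem (by simpa [hρ0] using hr)]

end BallVolume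

-- A ball that is not summable has junk volume `0`; the on-diagonal bound rules this out because
-- `p_{2n}(x,x) > 0`.
lemma summable_indicator_ball_of_iterKernel_le {ρ : Γ → Γ → ℝ}
    (hsym : ∀ x y, μ x y = μ y x)
    (hfin : ∀ x, {y | μ x y ≠ 0}.Finite) (hpos : ∀ x, 0 < graphMeasure μ x) {C : ℝ}
    (hdiag : ∀ k : ℕ, 1 ≤ k → ∀ x,
      iterKernel μ (k - 1) x x ≤ C / ballVol (graphMeasure μ) ρ x k)
    (x : Γ) (r : ℝ) : Summable ({y | ρ x y < r}.indicator (graphMeasure μ)) := by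
  set K := 2 * ⌈r⌉₊ + 1
  have hvol : ballVol (graphMeasure μ) ρ x K ≠ 0 := by
    intro h0
    have h := hdiag K (by omega) x
    rw [h0, div_zero, show K - 1 = 2 * ⌈r⌉₊ by omega] at h
    exact h.not_gt (iterKernel_two_mul_self_pos hsym hfin hpos _ x)
  have hK : Summable ({y | ρ x y < K}.indicator (graphMeasure μ)) := by
    by_contra h
    exact hvol (by rw [ballVol_eq_tsum_indicator, tsum_eq_zero_of_not_summable h])
  refine hK.indicator_ball_of_le (fun y => (hpos y).le) ((Nat.le_ceil r).trans ?_)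
  exact_mod_cast (by omega : ⌈r⌉₊ ≤ K)

lemma inv_one_add_pow_le_of_two_pow_le (N : ℕ) {t : ℝ} (ht : 0 ≤ t) {j : ℕ}
    (hj : ∀ i < j, (2 : ℝ) ^ i ≤ t) : ((1 + t) ^ N)⁻¹ ≤ 2 ^ N * ((2 ^ N) ^ j)⁻¹ := by
  cases j with
  | zero =>
    simpa using (inv_le_one_of_one_le₀ (one_le_pow₀ (by linarith))).trans
      (one_le_pow₀ (one_le_two : (1 : ℝ) ≤ 2))
  | succ i =>
    have h : (2 : ℝ) ^ i ≤ 1 + t := (hj i i.lt_succ_self).trans (by linarith)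
    calc ((1 + t) ^ N)⁻¹ ≤ (((2 : ℝ) ^ i) ^ N)⁻¹ :=
          inv_anti₀ (by positivity) (pow_le_pow_left₀ (by positivity) h N)
      _ = 2 ^ N * ((2 ^ N) ^ (i + 1))⁻¹ := by
          rw [← pow_mul, ← pow_mul, mul_add_one, pow_add, mul_comm i N]
          field_simp

lemma two_rpow_div_two_pow_le_half {d : ℝ} {N : ℕ} (hN : d + 1 ≤ N) :
    (2 : ℝ) ^ d / 2 ^ N ≤ 1 / 2 := by
  rw [div_le_iff₀ (by positivity), ← Real.rpow_natCast]
  calc (2 : ℝ) ^ d = 2 ^ (d + 1) / 2 := by rw [Real.rpow_add_one two_ne_zero]; ring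
    _ ≤ 2 ^ (N : ℝ) / 2 := by gcongr; norm_num
    _ = 1 / 2 * 2 ^ (N : ℝ) := by ring

lemma sum_range_pow_le_two {q : ℝ} (hq₀ : 0 ≤ q) (hq : q ≤ 1 / 2) (n : ℕ) :
    ∑ j ∈ range n, q ^ j ≤ 2 :=
  (sum_le_sum fun j _ => pow_le_pow_left₀ hq₀ hq j).trans (sum_geometric_two_le n)

section Doubling

variable {m : Γ → ℝ} {ρ : Γ → Γ → ℝ} {x : Γ} {Cd d : ℝ}
  (hm : ∀ y, 0 ≤ m y) (hρn : ∀ y, 0 ≤ ρ x y) (hCd : 0 ≤ Cd)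
  (hdouble : ∀ r lam : ℝ, 0 < r → 1 ≤ lam →
    ballVol m ρ x (lam * r) ≤ Cd * lam ^ d * ballVol m ρ x r)
  (hsum : ∀ r, Summable ({y | ρ x y < r}.indicator m))

-- In the dyadic shell `2^(j-1) r ≤ ρ(x,y) < 2^j r` the sum is at most
-- `2^N Cd V(x,r) (2^d / 2^N)^j` by doubling: a geometric series of ratio `≤ 1/2`.
include hm hρn hCd hdouble hsum in
lemma sum_inv_one_add_pow_mul_le {N : ℕ} (hN : d + 1 ≤ N) {r : ℝ} (hr : 0 < r)
    (s : Finset Γ) :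
    ∑ y ∈ s, ((1 + ρ x y / r) ^ N)⁻¹ * m y ≤ 2 ^ (N + 1) * Cd * ballVol m ρ x r := by
  classical
  have hex : ∀ y, ∃ j : ℕ, ρ x y / r < 2 ^ j := fun y => pow_unbounded_of_one_lt _ one_lt_two
  set shell : Γ → ℕ := fun y => Nat.find (hex y)
  set V := ballVol m ρ x r
  have hV : 0 ≤ V := ballVol_nonneg hm r
  set q : ℝ := 2 ^ d / 2 ^ N
  have hshell (j : ℕ) :
      ∑ y ∈ s with shell y = j, ((1 + ρ x y / r) ^ N)⁻¹ * m y ≤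
        2 ^ N * Cd * V * q ^ j := by
    calc ∑ y ∈ s with shell y = j, ((1 + ρ x y / r) ^ N)⁻¹ * m y
        ≤ ∑ y ∈ s with shell y = j, 2 ^ N * ((2 ^ N) ^ j)⁻¹ * m y := by
          refine sum_le_sum fun y hy => mul_le_mul_of_nonneg_right ?_ (hm y)
          refine inv_one_add_pow_le_of_two_pow_le N (div_nonneg (hρn y) hr.le) fun i hi => ?_
          have hj : Nat.find (hex y) = j := (mem_filter.1 hy).2
          exact not_lt.1 (Nat.find_min (hex y) (hj ▸ hi))
      _ = 2 ^ N * ((2 ^ N) ^ j)⁻¹ * ∑ y ∈ s with shell y = j, m y := by rw [mul_sum]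
      _ ≤ 2 ^ N * ((2 ^ N) ^ j)⁻¹ * ballVol m ρ x (2 ^ j * r) := by
          refine mul_le_mul_of_nonneg_left (sum_le_ballVol hm (hsum _) fun y hy => ?_)
            (by positivity)
          have hj : Nat.find (hex y) = j := (mem_filter.1 hy).2
          exact (div_lt_iff₀ hr).1 (hj ▸ Nat.find_spec (hex y))
      _ ≤ 2 ^ N * ((2 ^ N) ^ j)⁻¹ * (Cd * ((2 : ℝ) ^ j) ^ d * V) :=
          mul_le_mul_of_nonneg_left (hdouble r _ hr (one_le_pow₀ one_le_two)) (by positivity)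
      _ = 2 ^ N * Cd * V * q ^ j := by
          rw [← Real.rpow_pow_comm zero_le_two, div_pow]
          field_simp
  calc ∑ y ∈ s, ((1 + ρ x y / r) ^ N)⁻¹ * m y
      = ∑ j ∈ range (s.sup shell + 1),
          ∑ y ∈ s with shell y = j, ((1 + ρ x y / r) ^ N)⁻¹ * m y :=
        (sum_fiberwise_of_maps_to (fun y hy => mem_range.2 (Nat.lt_succ_of_le (le_sup hy))) _).symm
    _ ≤ ∑ j ∈ range (s.sup shell + 1), 2 ^ N * Cd * V * q ^ j :=
        sum_le_sum fun j _ => hshell j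
    _ = 2 ^ N * Cd * V * ∑ j ∈ range (s.sup shell + 1), q ^ j := by rw [mul_sum]
    _ ≤ 2 ^ N * Cd * V * 2 := by
        exact mul_le_mul_of_nonneg_left
          (sum_range_pow_le_two (by positivity) (two_rpow_div_two_pow_le_half hN) _) (by positivity)
    _ = 2 ^ (N + 1) * Cd * V := by ring

include hm hρn hCd hdouble hsum in
lemma sum_filter_le_of_le_decay {N : ℕ} (hN : d + 1 ≤ N) {r R A : ℝ} (hr : 0 < r) (hR : 0 < R)
    (hV : 0 < ballVol m ρ x r) (hA : 0 ≤ A) {f : Γ → ℝ}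
    (hf : ∀ y, f y ≤ A / ballVol m ρ x r * ((1 + ρ x y / r) ^ (N + 1))⁻¹) (s : Finset Γ) :
    ∑ y ∈ s with R ≤ ρ x y, f y * m y ≤ 2 ^ (N + 1) * Cd * A * (r / R) := by
  set V := ballVol m ρ x r
  have hone (y : Γ) : 1 ≤ 1 + ρ x y / r := le_add_of_nonneg_right (div_nonneg (hρn y) hr.le)
  have hdecay (y : Γ) (hy : R ≤ ρ x y) : (1 + ρ x y / r)⁻¹ ≤ r / R := by
    rw [inv_le_comm₀ (by linarith [hone y]) (by positivity), inv_div]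
    calc R / r ≤ ρ x y / r := by gcongr
      _ ≤ 1 + ρ x y / r := by linarith
  calc ∑ y ∈ s with R ≤ ρ x y, f y * m y
      ≤ ∑ y ∈ s with R ≤ ρ x y, A / V * (r / R) * (((1 + ρ x y / r) ^ N)⁻¹ * m y) := by
        refine sum_le_sum fun y hy => ?_
        have hy := (mem_filter.1 hy).2
        have hpow : 0 ≤ ((1 + ρ x y / r) ^ N)⁻¹ :=
          inv_nonneg.2 (pow_nonneg (by linarith [hone y]) N)
        calc f y * m y ≤ A / V * ((1 + ρ x y / r) ^ (N + 1))⁻¹ * m y :=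
              mul_le_mul_of_nonneg_right (hf y) (hm y)
          _ = A / V * (1 + ρ x y / r)⁻¹ * (((1 + ρ x y / r) ^ N)⁻¹ * m y) := by
              rw [pow_succ, mul_inv]; ring
          _ ≤ A / V * (r / R) * (((1 + ρ x y / r) ^ N)⁻¹ * m y) := by
              gcongr
              · exact mul_nonneg hpow (hm y)
              · exact hdecay y hy
    _ = A / V * (r / R) * ∑ y ∈ s with R ≤ ρ x y, ((1 + ρ x y / r) ^ N)⁻¹ * m y := by
        rw [mul_sum]
    _ ≤ A / V * (r / R) * (2 ^ (N + 1) * Cd * V) := by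
        gcongr
        exact sum_inv_one_add_pow_mul_le hm hρn hCd hdouble hsum hN hr _
    _ = 2 ^ (N + 1) * Cd * A * (r / R) := by field_simp

end Doubling

section OnDiagonal

variable {ρ : Γ → Γ → ℝ} {x : Γ} (hsym : ∀ x y, μ x y = μ y x)
  (hfin : ∀ x, {y | μ x y ≠ 0}.Finite) (hpos : ∀ x, 0 < graphMeasure μ x)

include hsym hfin hpos in
lemma sq_sum_iterKernel_mul_le {R : ℝ}
    (hsum : Summable ({y | ρ x y < R}.indicator (graphMeasure μ)))
    (k : ℕ) {s : Finset Γ} (hs : ∀ y ∈ s, ρ x y < R) :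
    (∑ y ∈ s, iterKernel μ k x y * graphMeasure μ y) ^ 2 ≤
      iterKernel μ (2 * k) x x * ballVol (graphMeasure μ) ρ x R := by
  have hm (y : Γ) : 0 ≤ graphMeasure μ y := (hpos y).le
  calc (∑ y ∈ s, iterKernel μ k x y * graphMeasure μ y) ^ 2
      ≤ (∑ y ∈ s, iterKernel μ k x y ^ 2 * graphMeasure μ y) *
          ∑ y ∈ s, graphMeasure μ y :=
        sum_sq_le_sum_mul_sum_of_sq_le_mul s (fun y _ => mul_nonneg (sq_nonneg _) (hm y))
          (fun y _ => hm y) fun y _ => by rw [mul_pow, sq (graphMeasure μ y), mul_assoc]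
    _ ≤ _ := by
        rw [iterKernel_two_mul_self hsym hfin hpos]
        refine mul_le_mul ?_ (sum_le_ballVol hm hsum hs) (sum_nonneg fun y _ => hm y)
          (tsum_nonneg fun y => mul_nonneg (sq_nonneg _) (hm y))
        refine Summable.sum_le_tsum s (fun y _ => mul_nonneg (sq_nonneg _) (hm y)) ?_
        simpa only [sq, mul_assoc] using summable_iterKernel_mul hfin k x _

include hsym hfin hpos in
lemma one_div_four_le_iterKernel_mul_ballVol {R : ℝ}
    (hsum : Summable ({y | ρ x y < R}.indicator (graphMeasure μ))) (k : ℕ)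
    (htail : ∀ s : Finset Γ,
      ∑ y ∈ s with R ≤ ρ x y, iterKernel μ k x y * graphMeasure μ y ≤ 1 / 2) :
    1 / 4 ≤ iterKernel μ (2 * k) x x * ballVol (graphMeasure μ) ρ x R := by
  classical
  set s := (finite_iterKernel_ne_zero hfin k x).toFinset
  have hmass : ∑ y ∈ s, iterKernel μ k x y * graphMeasure μ y = 1 := by
    rw [← tsum_iterKernel_mul_graphMeasure hfin hpos k x]
    refine (tsum_eq_sum fun y hy => ?_).symm
    rw [show iterKernel μ k x y = 0 by simpa [s] using hy, zero_mul]
  have hball :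
      1 / 2 ≤ ∑ y ∈ s with ¬ R ≤ ρ x y, iterKernel μ k x y * graphMeasure μ y := by
    linarith [htail s, sum_filter_add_sum_filter_not s (R ≤ ρ x ·)
      fun y => iterKernel μ k x y * graphMeasure μ y]
  calc (1 / 4 : ℝ) = (1 / 2) ^ 2 := by norm_num
    _ ≤ (∑ y ∈ s with ¬ R ≤ ρ x y, iterKernel μ k x y * graphMeasure μ y) ^ 2 :=
        pow_le_pow_left₀ (by norm_num) hball 2
    _ ≤ _ :=
        sq_sum_iterKernel_mul_le hsym hfin hpos hsum k fun y hy => not_le.1 (mem_filter.1 hy).2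

end OnDiagonal

section UpperEstimate

variable {ρ : Γ → Γ → ℝ} {x : Γ} (hpos : ∀ x, 0 < graphMeasure μ x) (hρ0 : ρ x x = 0)
  (hsum : ∀ r, Summable ({y | ρ x y < r}.indicator (graphMeasure μ)))

include hpos hρ0 hsum in
lemma iterKernel_two_mul_self_le {C : ℝ} (hC : 0 ≤ C)
    (hdiag : ∀ k : ℕ, 1 ≤ k →
      iterKernel μ (k - 1) x x ≤ C / ballVol (graphMeasure μ) ρ x k)
    {k : ℕ} (hk : 1 ≤ k) :
    iterKernel μ (2 * k) x x ≤ C / ballVol (graphMeasure μ) ρ x k := by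
  have hm (y : Γ) : 0 ≤ graphMeasure μ y := (hpos y).le
  calc iterKernel μ (2 * k) x x ≤ C / ballVol (graphMeasure μ) ρ x (2 * k + 1 : ℕ) := by
        simpa using hdiag (2 * k + 1) (by omega)
    _ ≤ C / ballVol (graphMeasure μ) ρ x k := by
        refine div_le_div_of_nonneg_left hC ?_ (ballVol_mono hm ?_ (hsum _))
        · exact ballVol_pos hm (hpos x) hρ0 (by exact_mod_cast hk) (hsum k)
        · push_cast; linarith

include hpos hρ0 hsum in
lemma sum_filter_iterKernel_mul_le (hρn : ∀ y, 0 ≤ ρ x y) {Cd d : ℝ} (hCd : 0 ≤ Cd)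
    (hdouble : ∀ r lam : ℝ, 0 < r → 1 ≤ lam →
      ballVol (graphMeasure μ) ρ x (lam * r) ≤ Cd * lam ^ d * ballVol (graphMeasure μ) ρ x r)
    {N : ℕ} (hN : d + 1 ≤ N) {C : ℝ} (hC : 0 ≤ C)
    (hUE : ∀ k : ℕ, 1 ≤ k → ∀ y, iterKernel μ (k - 1) x y ≤
      C / ballVol (graphMeasure μ) ρ x k * (1 + ρ x y / k) ^ (-((N + 1 : ℕ) : ℤ)))
    {Λ : ℝ} (hΛ : 0 < Λ) {k : ℕ} (hk : 1 ≤ k) (s : Finset Γ) :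
    ∑ y ∈ s with Λ * k ≤ ρ x y, iterKernel μ k x y * graphMeasure μ y ≤
      2 ^ (N + 2) * Cd * C / Λ := by
  have hm (y : Γ) : 0 ≤ graphMeasure μ y := (hpos y).le
  have hk : (1 : ℝ) ≤ k := by exact_mod_cast hk
  have hV : 0 < ballVol (graphMeasure μ) ρ x (k + 1) :=
    ballVol_pos hm (hpos x) hρ0 (by linarith) (hsum _)
  refine (sum_filter_le_of_le_decay hm hρn hCd hdouble hsum hN (r := k + 1) (by linarith)
    (by positivity) hV hC (fun y => ?_) s).trans ?_
  · have h := hUE (k + 1) (by omega) y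
    rw [Nat.add_sub_cancel, zpow_neg, zpow_natCast] at h
    exact_mod_cast h
  · have hratio : ((k : ℝ) + 1) / (Λ * k) ≤ 2 / Λ := by
      rw [div_le_div_iff₀ (by positivity) hΛ]
      nlinarith
    calc 2 ^ (N + 1) * Cd * C * ((k + 1) / (Λ * k)) ≤ 2 ^ (N + 1) * Cd * C * (2 / Λ) := by
          gcongr
      _ = 2 ^ (N + 2) * Cd * C / Λ := by ring

end UpperEstimate

end

theorem stmt_18_general {Γ : Type*} (μ : Γ → Γ → ℝ) (ρ : Γ → Γ → ℝ)
    (hsym : ∀ x y, μ x y = μ y x)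
    (hfin : ∀ x, {y | μ x y ≠ 0}.Finite) (hpos : ∀ x, 0 < graphMeasure μ x)
    (hρ0 : ∀ x, ρ x x = 0) (hρn : ∀ x y, 0 ≤ ρ x y)
    (Cd d : ℝ) (hCd : 0 < Cd)
    (hdouble : ∀ x : Γ, ∀ r lam : ℝ, 0 < r → 1 ≤ lam →
      ballVol (graphMeasure μ) ρ x (lam * r) ≤ Cd * lam ^ d * ballVol (graphMeasure μ) ρ x r)
    (hUE : ∀ N : ℕ, ∃ C : ℝ, 0 < C ∧ ∀ k : ℕ, 1 ≤ k → ∀ x y : Γ,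
      iterKernel μ (k - 1) x y
        ≤ C / ballVol (graphMeasure μ) ρ x k * (1 + ρ x y / k) ^ (-(N : ℤ))) :
    ∃ c C : ℝ, 0 < c ∧ 0 < C ∧ ∀ x : Γ, ∀ k : ℕ, 1 ≤ k →
      c / ballVol (graphMeasure μ) ρ x k ≤ iterKernel μ (2 * k) x x ∧
      iterKernel μ (2 * k) x x ≤ C / ballVol (graphMeasure μ) ρ x k := by
  have hm (y : Γ) : 0 ≤ graphMeasure μ y := (hpos y).le
  obtain ⟨C₀, hC₀, hUE₀⟩ := hUE 0
  have hdiag (k : ℕ) (hk : 1 ≤ k) (x : Γ) :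
      iterKernel μ (k - 1) x x ≤ C₀ / ballVol (graphMeasure μ) ρ x k := by
    simpa [hρ0] using hUE₀ k hk x x
  have hsum := summable_indicator_ball_of_iterKernel_le hsym hfin hpos hdiag
  obtain ⟨N, hN⟩ : ∃ N : ℕ, d + 1 ≤ N :=
    ⟨⌈d⌉₊ + 1, by push_cast; linarith [Nat.le_ceil d]⟩
  obtain ⟨C, hC, hUEN⟩ := hUE (N + 1)
  set Λ : ℝ := 2 ^ (N + 3) * Cd * C + 1
  have hΛ : 1 ≤ Λ := by simp only [Λ]; linarith [show 0 < 2 ^ (N + 3) * Cd * C by positivity]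
  refine ⟨1 / (4 * (Cd * Λ ^ d)), C₀, by positivity, hC₀, fun x k hk => ⟨?_,
    iterKernel_two_mul_self_le hpos (hρ0 x) (hsum x) hC₀.le (fun k hk => hdiag k hk x) hk⟩⟩
  have htail (s : Finset Γ) :
      ∑ y ∈ s with Λ * k ≤ ρ x y, iterKernel μ k x y * graphMeasure μ y ≤ 1 / 2 := by
    refine (sum_filter_iterKernel_mul_le hpos (hρ0 x) (hsum x) (hρn x) hCd.le (hdouble x) hN
      hC.le (fun k hk => hUEN k hk x) (by linarith) hk s).trans ?_
    rw [div_le_iff₀ (by linarith)]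
    simp only [Λ, pow_succ]
    linarith
  have hquarter := one_div_four_le_iterKernel_mul_ballVol hsym hfin hpos (hsum x _) k htail
  have hdbl := hdouble x k Λ (by exact_mod_cast hk) hΛ
  have hVk := ballVol_pos hm (hpos x) (hρ0 x) (by exact_mod_cast hk) (hsum x k)
  have hp := (iterKernel_two_mul_self_pos hsym hfin hpos k x).le
  rw [div_div, div_le_iff₀ (by positivity)]
  nlinarith [mul_le_mul_of_nonneg_left hdbl hp]

/-- Under doubling (D_β) and the pointwise upper estimate (UE_β), the matching
on-diagonal lower bound holds: `p_{2k}(x,x) ≃ V_ρ(x,k)⁻¹`. -/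
theorem stmt_18 {Γ : Type*} (μ : Γ → Γ → ℝ) (ρ : Γ → Γ → ℝ) (B : ℝ) (hB : 1 ≤ B)
    (hsym : ∀ x y, μ x y = μ y x) (hnonneg : ∀ x y, 0 ≤ μ x y)
    (hfin : ∀ x, {y | μ x y ≠ 0}.Finite) (hpos : ∀ x, 0 < graphMeasure μ x)
    (hρ0 : ∀ x, ρ x x = 0) (hρn : ∀ x y, 0 ≤ ρ x y) (hρs : ∀ x y, ρ x y = ρ y x)
    (hquasi : ∀ x y z, ρ x z ≤ 2 ^ (B - 1) * (ρ x y + ρ y z))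
    (Cd d : ℝ) (hCd : 0 < Cd) (hd : 0 < d)
    (hdouble : ∀ x : Γ, ∀ r lam : ℝ, 0 < r → 1 ≤ lam →
      ballVol (graphMeasure μ) ρ x (lam * r) ≤ Cd * lam ^ d * ballVol (graphMeasure μ) ρ x r)
    (hUE : ∀ N : ℕ, ∃ C : ℝ, 0 < C ∧ ∀ k : ℕ, 1 ≤ k → ∀ x y : Γ,
      iterKernel μ (k - 1) x y
        ≤ C / ballVol (graphMeasure μ) ρ x k * (1 + ρ x y / k) ^ (-(N : ℤ))) :
    ∃ c C : ℝ, 0 < c ∧ 0 < C ∧ ∀ x : Γ, ∀ k : ℕ, 1 ≤ k →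
      c / ballVol (graphMeasure μ) ρ x k ≤ iterKernel μ (2 * k) x x ∧
      iterKernel μ (2 * k) x x ≤ C / ballVol (graphMeasure μ) ρ x k :=
  stmt_18_general μ ρ hsym hfin hpos hρ0 hρn Cd d hCd hdouble hUE
end
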